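/- Let λ1, λ2 ∈ Q_I^{++}, and suppose μ1, μ2 ∈ V are subdominant to λ1 and λ2 respectively and ⟨μ1, μ2⟩ = ⟨λ1, λ2⟩. Then there exists a single element w ∈ W, sending α_i to a positive root for every i ∈ I (i.e. w ∈ W^I), such that μ1 = wλ1 and μ2 = wλ2. -/

import Mathlib

/-!
Combinatorial setup: a finite crystallographic root system `Φ` spanning a Euclidean
space `V`, with a chosen system of simple roots `α 1, …, α r`, simple coroots
`αᵛ i = (2/⟪α i, α i⟫) • α i`, Weyl group `W` (the subgroup of linear isometries
generated by the reflections in the simple roots), dominant elements, and the notion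
of `μ` being subdominant to a dominant `λ` (the dominant representative `μ⁺` of the
orbit `W μ` satisfies `λ - μ⁺ ∈ Σᵢ ℝ≥0 αᵛ i`).  `Q_I^+` is encoded via the pairings
with the simple coroots: `λ ∈ Q_I^+` iff `⟪λ, αᵛ j⟫ ∈ ℤ≥0` for all `j` and
`⟪λ, αᵛ j⟫ = 0` for `j ∈ I` (equivalently `λ = Σ_{i ∉ I} n_i ω_i`, `n_i ∈ ℤ≥0`,
where the `ω_i` are the fundamental weights, the dual basis to the simple coroots).
-/

open scoped RealInnerProductSpace

/-- A finite crystallographic root system spanning `V`, together with a choice of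
system of simple roots `α 1, …, α r`. -/
structure SimpleSystem (V : Type*) [NormedAddCommGroup V] [InnerProductSpace ℝ V]
    (r : ℕ) where
  /-- the (finite) set of roots -/
  Φ : Finset V
  /-- the simple roots -/
  α : Fin r → V
  α_mem : ∀ i, α i ∈ Φ
  ne_zero : ∀ β ∈ Φ, β ≠ 0
  span_eq_top : Submodule.span ℝ (Φ : Set V) = ⊤
  indep : LinearIndependent ℝ α
  /-- every root is a nonnegative or a nonpositive combination of the simple roots -/
  base : ∀ β ∈ Φ, (∃ c : Fin r → ℝ, (∀ i, 0 ≤ c i) ∧ β = ∑ i, c i • α i) ∨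
      (∃ c : Fin r → ℝ, (∀ i, 0 ≤ c i) ∧ β = - ∑ i, c i • α i)
  /-- the crystallographic condition -/
  crystallographic : ∀ β ∈ Φ, ∀ γ ∈ Φ, ∃ n : ℤ, 2 * ⟪β, γ⟫ / ⟪γ, γ⟫ = (n : ℝ)
  /-- `Φ` is stable under the reflections `s_β` -/
  reflect_mem : ∀ β ∈ Φ, ∀ γ ∈ Φ, γ - (2 * ⟪γ, β⟫ / ⟪β, β⟫) • β ∈ Φ

namespace SimpleSystem

variable {V : Type*} [NormedAddCommGroup V] [InnerProductSpace ℝ V]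
  [FiniteDimensional ℝ V] {r : ℕ}

/-- The simple coroot `αᵛ i = 2 α i / ⟪α i, α i⟫`. -/
noncomputable def coroot (S : SimpleSystem V r) (i : Fin r) : V :=
  (2 / ⟪S.α i, S.α i⟫) • S.α i

/-- The simple reflection `s_i`: the orthogonal reflection in the hyperplane
orthogonal to the simple root `α i`. -/
noncomputable def simpleReflection (S : SimpleSystem V r) (i : Fin r) : V ≃ₗᵢ[ℝ] V :=
  Submodule.reflection (ℝ ∙ S.α i)ᗮ

/-- The Weyl group `W`, as a group of linear isometries of `V`. -/
def weylGroup (S : SimpleSystem V r) : Subgroup (V ≃ₗᵢ[ℝ] V) :=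
  Subgroup.closure (Set.range S.simpleReflection)

/-- `ξ ∈ V` is dominant if `⟪ξ, αᵛ i⟫ ≥ 0` for all `i`. -/
def IsDominant (S : SimpleSystem V r) (ξ : V) : Prop :=
  ∀ i, 0 ≤ ⟪ξ, S.coroot i⟫

/-- `μ` is subdominant to (the dominant element) `lam` if the dominant element `μ⁺`
of the orbit `W μ` satisfies `lam - μ⁺ ∈ Σᵢ ℝ≥0 • (αᵛ i)`. -/
def IsSubdominant (S : SimpleSystem V r) (lam μ : V) : Prop :=
  ∃ w ∈ S.weylGroup, S.IsDominant (w μ) ∧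
    ∃ c : Fin r → ℝ, (∀ i, 0 ≤ c i) ∧ lam - w μ = ∑ i, c i • S.coroot i

/-- Membership in `Q_I^+ = {Σ_{i ∈ Iᶜ} n_i ω_i : n_i ∈ ℤ≥0}`, characterized by the
pairings with the simple coroots: all of them are nonnegative integers, and those
indexed by `I` vanish. -/
def MemQplus (S : SimpleSystem V r) (I : Finset (Fin r)) (lam : V) : Prop :=
  ∀ j, (∃ n : ℕ, ⟪lam, S.coroot j⟫ = (n : ℝ)) ∧ (j ∈ I → ⟪lam, S.coroot j⟫ = 0)

/-- Membership in `Q_I^{++} = {Σ_{i ∈ Iᶜ} n_i ω_i : n_i ∈ ℤ>0}`. -/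
def MemQplusplus (S : SimpleSystem V r) (I : Finset (Fin r)) (lam : V) : Prop :=
  ∀ j, (j ∉ I → ∃ n : ℕ, 0 < n ∧ ⟪lam, S.coroot j⟫ = (n : ℝ)) ∧
    (j ∈ I → ⟪lam, S.coroot j⟫ = 0)

/-- `β` is a positive root: a root which is a nonnegative combination of the
simple roots. -/
def IsPositiveRoot (S : SimpleSystem V r) (β : V) : Prop :=
  β ∈ S.Φ ∧ ∃ c : Fin r → ℝ, (∀ i, 0 ≤ c i) ∧ β = ∑ i, c i • S.α i

end SimpleSystem

/-!
Let `ξ = w₁ μ₁` and `η = w₂ μ₂` be the dominant representatives. Then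
`⟪λ₁, λ₂⟫ - ⟪μ₁, μ₂⟫ = ⟪λ₂, λ₁ - ξ⟫ + ⟪ξ, λ₂ - η⟫ + ⟪ξ, η - w₁ w₂⁻¹ η⟫`, and each term is
nonnegative: dominant vectors pair nonnegatively with the cone spanned by the simple (co)roots,
and `η - w η` lies in that cone for every `w ∈ W`. Equality forces all three terms to vanish.
Since `λ₁, λ₂` pair strictly positively with `α j` for `j ∉ I`, the differences `λ₁ - ξ`,
`λ₂ - η`, `λ₂ - w₁ w₂⁻¹ λ₂` are supported on `I`, where `λ₁, λ₂` are orthogonal to the roots;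
this gives `ξ = λ₁`, `η = λ₂` and `w₁ w₂⁻¹ λ₂ = λ₂`. So `w₁⁻¹` maps `λ₁, λ₂` to `μ₁, μ₂`, and
so does the minimal representative of `w₁⁻¹ W_I`, as `W_I` fixes `λ₁, λ₂`.

The two Weyl group facts used (`η - w η` is a nonnegative combination of simple roots, and
minimal coset representatives exist) follow by induction on word length from the exchange
condition.
-/

section NonnegCombination

variable {ι V : Type*} [Fintype ι] [NormedAddCommGroup V] [InnerProductSpace ℝ V]
  {v : ι → V} {c : ι → ℝ}

theorem inner_sum_smul_nonneg {y : V} (hc : ∀ i, 0 ≤ c i) (hy : ∀ i, 0 ≤ ⟪y, v i⟫) :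
    0 ≤ ⟪y, ∑ i, c i • v i⟫ := by
  rw [inner_sum]
  exact Finset.sum_nonneg fun i _ => by
    rw [real_inner_smul_right]; exact mul_nonneg (hc i) (hy i)

theorem eq_zero_of_inner_sum_smul_nonpos {y : V} (hc : ∀ i, 0 ≤ c i)
    (hy : ∀ i, 0 ≤ ⟪y, v i⟫) (h : ⟪y, ∑ i, c i • v i⟫ ≤ 0) {i : ι} (hi : 0 < ⟪y, v i⟫) :
    c i = 0 := by
  have hterm : ∀ j ∈ Finset.univ, 0 ≤ c j * ⟪y, v j⟫ := fun j _ => mul_nonneg (hc j) (hy j)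
  have hsum : ∑ j, c j * ⟪y, v j⟫ = 0 := by
    simp only [inner_sum, real_inner_smul_right] at h
    exact le_antisymm h (Finset.sum_nonneg hterm)
  have := (Finset.sum_eq_zero_iff_of_nonneg hterm).1 hsum i (Finset.mem_univ i)
  exact (mul_eq_zero.1 this).resolve_right hi.ne'

theorem sum_smul_eq_zero_of_inner_nonpos (hc : ∀ i, 0 ≤ c i)
    (h : ∀ i, c i ≠ 0 → ⟪∑ j, c j • v j, v i⟫ ≤ 0) : ∑ i, c i • v i = 0 := by
  set x := ∑ i, c i • v i with hx
  refine real_inner_self_nonpos.1 ?_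
  calc ⟪x, x⟫ = ∑ i, c i * ⟪x, v i⟫ := by
        nth_rewrite 2 [hx]; simp only [inner_sum, real_inner_smul_right]
    _ ≤ 0 := Finset.sum_nonpos fun i _ => by
        by_cases hci : c i = 0
        · rw [hci, zero_mul]
        · exact mul_nonpos_of_nonneg_of_nonpos (hc i) (h i hci)

end NonnegCombination

theorem eq_of_norm_eq_of_inner_sub_eq_zero {V : Type*} [NormedAddCommGroup V]
    [InnerProductSpace ℝ V] {x y : V} (hn : ‖y‖ = ‖x‖) (h : ⟪x, x - y⟫ = 0) : y = x := by
  have := norm_sub_sq_real x (x - y)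
  rw [sub_sub_cancel, hn, h] at this
  exact (sub_eq_zero.1 (norm_eq_zero.1 (pow_eq_zero_iff two_ne_zero |>.1 (by linarith)))).symm

theorem Submodule.reflection_orthogonal_span_singleton_eq_conj {V : Type*}
    [NormedAddCommGroup V] [InnerProductSpace ℝ V] {u : V ≃ₗᵢ[ℝ] V} {v w : V} {t : ℝ}
    (ht : t ≠ 0) (h : u v = t • w) :
    reflection (ℝ ∙ w)ᗮ = u.symm.trans ((reflection (ℝ ∙ v)ᗮ).trans u) := by
  convert reflection_map u (ℝ ∙ v)ᗮ using 2
  rw [map_orthogonal_equiv, map_span, Set.image_singleton]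
  change (ℝ ∙ w)ᗮ = (ℝ ∙ u v)ᗮ
  rw [h, span_singleton_smul_eq ht.isUnit]

namespace SimpleSystem

variable {V : Type*} [NormedAddCommGroup V] [InnerProductSpace ℝ V] {r : ℕ}
  (S : SimpleSystem V r)

theorem inner_α_self_pos (i : Fin r) : 0 < ⟪S.α i, S.α i⟫ :=
  real_inner_self_pos.2 (S.ne_zero _ (S.α_mem i))

theorem inner_coroot (x : V) (i : Fin r) :
    ⟪x, S.coroot i⟫ = 2 * ⟪x, S.α i⟫ / ⟪S.α i, S.α i⟫ := by
  rw [coroot, real_inner_smul_right]; ring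

theorem inner_coroot_pos_iff {x : V} {i : Fin r} : 0 < ⟪x, S.coroot i⟫ ↔ 0 < ⟪x, S.α i⟫ := by
  rw [inner_coroot, div_pos_iff_of_pos_right (S.inner_α_self_pos i)]
  exact mul_pos_iff_of_pos_left two_pos

theorem inner_coroot_nonneg_iff {x : V} {i : Fin r} :
    0 ≤ ⟪x, S.coroot i⟫ ↔ 0 ≤ ⟪x, S.α i⟫ := by
  rw [inner_coroot, le_div_iff₀ (S.inner_α_self_pos i), zero_mul,
    mul_nonneg_iff_of_pos_left two_pos]

theorem inner_coroot_eq_zero_iff {x : V} {i : Fin r} :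
    ⟪x, S.coroot i⟫ = 0 ↔ ⟪x, S.α i⟫ = 0 := by
  rw [inner_coroot, div_eq_zero_iff, or_iff_left (S.inner_α_self_pos i).ne', mul_eq_zero,
    or_iff_right two_ne_zero]

theorem simpleReflection_apply (i : Fin r) (x : V) :
    S.simpleReflection i x = x - ⟪x, S.coroot i⟫ • S.α i := by
  rw [simpleReflection, Submodule.reflection_orthogonal_apply,
    Submodule.reflection_singleton_apply, inner_coroot, real_inner_comm]
  simp only [RCLike.ofReal_real_eq_id, id_eq, ← real_inner_self_eq_norm_sq]
  module

theorem simpleReflection_apply_self (i : Fin r) : S.simpleReflection i (S.α i) = -S.α i := by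
  rw [simpleReflection_apply, inner_coroot, mul_div_assoc, div_self (S.inner_α_self_pos i).ne']
  module

theorem simpleReflection_apply_of_inner_coroot_eq_zero {i : Fin r} {x : V}
    (h : ⟪x, S.coroot i⟫ = 0) : S.simpleReflection i x = x := by
  rw [simpleReflection_apply, h, zero_smul, sub_zero]

theorem simpleReflection_mul_self (i : Fin r) : S.simpleReflection i * S.simpleReflection i = 1 :=
  Submodule.reflection_mul_reflection _

theorem simpleReflection_inv (i : Fin r) : (S.simpleReflection i)⁻¹ = S.simpleReflection i :=
  inv_eq_of_mul_eq_one_right (S.simpleReflection_mul_self i)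

theorem simpleReflection_mem_weylGroup (i : Fin r) : S.simpleReflection i ∈ S.weylGroup :=
  Subgroup.subset_closure ⟨i, rfl⟩

theorem simpleReflection_apply_mem {β : V} (hβ : β ∈ S.Φ) (i : Fin r) :
    S.simpleReflection i β ∈ S.Φ := by
  rw [simpleReflection_apply, inner_coroot]
  exact S.reflect_mem _ (S.α_mem i) β hβ

theorem simpleReflection_mul_eq_mul_simpleReflection {u : V ≃ₗᵢ[ℝ] V} {j k : Fin r} {t : ℝ}
    (ht : t ≠ 0) (h : u (S.α k) = t • S.α j) :
    S.simpleReflection j * u = u * S.simpleReflection k := by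
  have hconj : S.simpleReflection j = u.symm.trans ((S.simpleReflection k).trans u) :=
    Submodule.reflection_orthogonal_span_singleton_eq_conj ht h
  rw [hconj]
  ext x
  simp [LinearIsometryEquiv.mul_def]


def IsNegativeRoot (β : V) : Prop :=
  β ∈ S.Φ ∧ ∃ c : Fin r → ℝ, (∀ i, 0 ≤ c i) ∧ β = -∑ i, c i • S.α i

theorem isPositiveRoot_or_isNegativeRoot {β : V} (hβ : β ∈ S.Φ) :
    S.IsPositiveRoot β ∨ S.IsNegativeRoot β :=
  (S.base β hβ).imp (⟨hβ, ·⟩) (⟨hβ, ·⟩)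

theorem eq_of_sum_smul_α_eq {c d : Fin r → ℝ} (h : ∑ i, c i • S.α i = ∑ i, d i • S.α i)
    (i : Fin r) : c i = d i :=
  Fintype.linearIndependent_iffₛ.1 S.indep c d h i

theorem isPositiveRoot_α (i : Fin r) : S.IsPositiveRoot (S.α i) := by
  classical
  refine ⟨S.α_mem i, Pi.single i 1, fun j => ?_, ?_⟩
  · by_cases hj : j = i <;> simp [hj]
  · simp [Pi.single_apply, ite_smul]

variable {S} in
theorem IsPositiveRoot.not_isNegativeRoot {β : V} (h : S.IsPositiveRoot β) :
    ¬ S.IsNegativeRoot β := by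
  rintro ⟨-, d, hd, hdβ⟩
  obtain ⟨hβ, c, hc, hcβ⟩ := h
  have hcd : ∀ i, c i = -d i := S.eq_of_sum_smul_α_eq <| by
    rw [← hcβ, hdβ]; simp [neg_smul, Finset.sum_neg_distrib]
  apply S.ne_zero β hβ
  rw [hcβ]
  exact Finset.sum_eq_zero fun i _ => by
    rw [le_antisymm (by linarith [hcd i, hd i]) (hc i), zero_smul]

variable {S} in
theorem IsPositiveRoot.exists_eq_smul_of_isNegativeRoot {β : V} {j : Fin r}
    (hβ : S.IsPositiveRoot β) (hneg : S.IsNegativeRoot (S.simpleReflection j β)) :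
    ∃ t : ℝ, t ≠ 0 ∧ β = t • S.α j := by
  classical
  obtain ⟨hβΦ, c, hc, hcβ⟩ := hβ
  obtain ⟨-, d, hd, hdβ⟩ := hneg
  have hcoeff : ∀ i, i ≠ j → c i = 0 := by
    intro i hij
    have := S.eq_of_sum_smul_α_eq (c := c - Pi.single j ⟪β, S.coroot j⟫) (d := -d) ?_ i
    · simp only [Pi.sub_apply, Pi.single_apply, hij, if_false, sub_zero, Pi.neg_apply] at this
      linarith [hc i, hd i]
    · rw [simpleReflection_apply] at hdβ
      simp only [Pi.sub_apply, Pi.neg_apply, sub_smul, neg_smul, Finset.sum_sub_distrib,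
        Finset.sum_neg_distrib, ← hdβ, ← hcβ, Pi.single_apply, ite_smul, zero_smul,
        Finset.sum_ite_eq', Finset.mem_univ, if_true]
  have hβj : β = c j • S.α j := by
    rw [hcβ, Fintype.sum_eq_single j fun i hi => by rw [hcoeff i hi, zero_smul]]
  exact ⟨c j, fun h0 => S.ne_zero β hβΦ (by rw [hβj, h0, zero_smul]), hβj⟩

noncomputable def wordProd (l : List (Fin r)) : V ≃ₗᵢ[ℝ] V := (l.map S.simpleReflection).prod

@[simp] theorem wordProd_nil : S.wordProd [] = 1 := rfl

theorem wordProd_cons (j : Fin r) (l : List (Fin r)) :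
    S.wordProd (j :: l) = S.simpleReflection j * S.wordProd l := by
  simp [wordProd]

theorem wordProd_concat (l : List (Fin r)) (k : Fin r) :
    S.wordProd (l.concat k) = S.wordProd l * S.simpleReflection k := by
  simp [wordProd]

theorem wordProd_mem_weylGroup (l : List (Fin r)) : S.wordProd l ∈ S.weylGroup := by
  induction l with
  | nil => exact one_mem _
  | cons j l ih =>
    rw [wordProd_cons]; exact mul_mem (S.simpleReflection_mem_weylGroup j) ih

theorem exists_wordProd_eq {w : V ≃ₗᵢ[ℝ] V} (hw : w ∈ S.weylGroup) :
    ∃ l, S.wordProd l = w := by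
  induction hw using Subgroup.closure_induction'' with
  | mem _ hx =>
    obtain ⟨i, rfl⟩ := hx
    exact ⟨[i], by simp [wordProd]⟩
  | inv_mem _ hx =>
    obtain ⟨i, rfl⟩ := hx
    exact ⟨[i], by simp [wordProd, simpleReflection_inv]⟩
  | one => exact ⟨[], rfl⟩
  | mul _ _ _ _ hx hy =>
    obtain ⟨l₁, rfl⟩ := hx
    obtain ⟨l₂, rfl⟩ := hy
    exact ⟨l₁ ++ l₂, by simp [wordProd]⟩

theorem wordProd_apply_mem (l : List (Fin r)) {β : V} (hβ : β ∈ S.Φ) : S.wordProd l β ∈ S.Φ := by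
  induction l with
  | nil => exact hβ
  | cons j l ih =>
    rw [wordProd_cons, LinearIsometryEquiv.coe_mul, Function.comp_apply]
    exact S.simpleReflection_apply_mem ih j

theorem isPositiveRoot_wordProd_apply_α_of_not_isNegativeRoot {l : List (Fin r)} {i : Fin r}
    (h : ¬ S.IsNegativeRoot (S.wordProd l (S.α i))) : S.IsPositiveRoot (S.wordProd l (S.α i)) :=
  (S.isPositiveRoot_or_isNegativeRoot (S.wordProd_apply_mem l (S.α_mem i))).resolve_right h

theorem wordProd_apply_eq_self {l : List (Fin r)} {x : V}
    (hx : ∀ j ∈ l, ⟪x, S.coroot j⟫ = 0) : S.wordProd l x = x := by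
  induction l with
  | nil => rfl
  | cons j l ih =>
    rw [List.forall_mem_cons] at hx
    rw [wordProd_cons, LinearIsometryEquiv.coe_mul, Function.comp_apply, ih hx.2,
      S.simpleReflection_apply_of_inner_coroot_eq_zero hx.1]

/-- The exchange condition. -/
theorem exists_length_lt_wordProd_eq_mul (l : List (Fin r)) {k : Fin r}
    (h : S.IsNegativeRoot (S.wordProd l (S.α k))) :
    ∃ l' : List (Fin r), l'.length < l.length ∧
      S.wordProd l' = S.wordProd l * S.simpleReflection k := by
  induction l with
  | nil => exact absurd h (S.isPositiveRoot_α k).not_isNegativeRoot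
  | cons j l ih =>
    by_cases hl : S.IsNegativeRoot (S.wordProd l (S.α k))
    · obtain ⟨l', hlen, hl'⟩ := ih hl
      exact ⟨j :: l', by simpa using hlen, by rw [wordProd_cons, wordProd_cons, hl', mul_assoc]⟩
    · rw [wordProd_cons, LinearIsometryEquiv.coe_mul, Function.comp_apply] at h
      have hpos := S.isPositiveRoot_wordProd_apply_α_of_not_isNegativeRoot hl
      obtain ⟨t, ht, hγ⟩ := hpos.exists_eq_smul_of_isNegativeRoot h
      refine ⟨l, by simp, ?_⟩
      rw [wordProd_cons, S.simpleReflection_mul_eq_mul_simpleReflection ht hγ, mul_assoc,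
        simpleReflection_mul_self, mul_one]

theorem wordProd_eq_one_of_forall_isPositiveRoot (l : List (Fin r))
    (h : ∀ i, S.IsPositiveRoot (S.wordProd l (S.α i))) : S.wordProd l = 1 := by
  induction hn : l.length using Nat.strong_induction_on generalizing l with
  | _ n ih =>
  rcases l.eq_nil_or_concat with rfl | ⟨l₀, k, rfl⟩
  · rfl
  have hneg : S.IsNegativeRoot (S.wordProd l₀ (S.α k)) := by
    obtain ⟨-, c, hc, hck⟩ := h k
    refine ⟨S.wordProd_apply_mem l₀ (S.α_mem k), c, hc, ?_⟩
    rw [← hck, wordProd_concat, LinearIsometryEquiv.coe_mul, Function.comp_apply,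
      simpleReflection_apply_self, map_neg, neg_neg]
  obtain ⟨l', hlt, hl'⟩ := S.exists_length_lt_wordProd_eq_mul l₀ hneg
  rw [wordProd_concat, ← hl'] at h ⊢
  exact ih l'.length (by simp at hn; omega) l' h rfl

variable {S}

theorem IsDominant.exists_sub_wordProd_apply_eq_sum {x : V} (hx : S.IsDominant x)
    (l : List (Fin r)) :
    ∃ a : Fin r → ℝ, (∀ i, 0 ≤ a i) ∧ x - S.wordProd l x = ∑ i, a i • S.α i := by
  induction hn : l.length using Nat.strong_induction_on generalizing l with
  | _ n ih =>
  by_cases hneg : ∃ i, S.IsNegativeRoot (S.wordProd l (S.α i))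
  · obtain ⟨i, hi⟩ := hneg
    obtain ⟨l', hlt, hl'⟩ := S.exists_length_lt_wordProd_eq_mul l hi
    obtain ⟨a, ha, hax⟩ := ih _ (hn ▸ hlt) l' rfl
    obtain ⟨-, b, hb, hbi⟩ := hi
    have hstep : x - S.wordProd l x =
        (x - S.wordProd l' x) + ⟪x, S.coroot i⟫ • -S.wordProd l (S.α i) := by
      rw [hl', LinearIsometryEquiv.coe_mul, Function.comp_apply, simpleReflection_apply,
        map_sub, map_smul]
      module
    refine ⟨a + ⟪x, S.coroot i⟫ • b, fun j => add_nonneg (ha j) (mul_nonneg (hx i) (hb j)), ?_⟩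
    rw [hstep, hax, hbi, neg_neg]
    simp only [Pi.add_apply, Pi.smul_apply, smul_eq_mul, add_smul, Finset.sum_add_distrib,
      Finset.smul_sum, smul_smul]
  · push Not at hneg
    rw [S.wordProd_eq_one_of_forall_isPositiveRoot l
      fun i => S.isPositiveRoot_wordProd_apply_α_of_not_isNegativeRoot (hneg i)]
    exact ⟨0, fun _ => le_rfl, by simp⟩

theorem IsDominant.inner_sub_apply_nonneg {ξ η : V} (hξ : S.IsDominant ξ) (hη : S.IsDominant η)
    {w : V ≃ₗᵢ[ℝ] V} (hw : w ∈ S.weylGroup) : 0 ≤ ⟪ξ, η - w η⟫ := by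
  obtain ⟨l, rfl⟩ := S.exists_wordProd_eq hw
  obtain ⟨a, ha, hsub⟩ := hη.exists_sub_wordProd_apply_eq_sum l
  rw [hsub]
  exact inner_sum_smul_nonneg ha fun i => S.inner_coroot_nonneg_iff.1 (hξ i)

variable (S) in
theorem exists_forall_isPositiveRoot_wordProd_mul (I : Finset (Fin r)) (l : List (Fin r)) :
    ∃ m : List (Fin r), (∀ j ∈ m, j ∈ I) ∧
      ∀ i ∈ I, S.IsPositiveRoot ((S.wordProd l * S.wordProd m) (S.α i)) := by
  induction hn : l.length using Nat.strong_induction_on generalizing l with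
  | _ n ih =>
  by_cases hneg : ∃ i ∈ I, S.IsNegativeRoot (S.wordProd l (S.α i))
  · obtain ⟨i, hi, hneg⟩ := hneg
    obtain ⟨l', hlt, hl'⟩ := S.exists_length_lt_wordProd_eq_mul l hneg
    obtain ⟨m, hmI, hm⟩ := ih _ (hn ▸ hlt) l' rfl
    refine ⟨i :: m, List.forall_mem_cons.2 ⟨hi, hmI⟩, ?_⟩
    rwa [wordProd_cons, ← mul_assoc, ← hl']
  · push Not at hneg
    refine ⟨[], by simp, fun i hi => ?_⟩
    rw [wordProd_nil, mul_one]
    exact S.isPositiveRoot_wordProd_apply_α_of_not_isNegativeRoot (hneg i hi)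

variable (S) in
/-- Every coset `w W_I` has a representative in `W^I`. -/
theorem exists_minimal_coset_rep (I : Finset (Fin r)) {w : V ≃ₗᵢ[ℝ] V} (hw : w ∈ S.weylGroup) :
    ∃ w' ∈ S.weylGroup, (∀ i ∈ I, S.IsPositiveRoot (w' (S.α i))) ∧
      ∀ x, (∀ j ∈ I, ⟪x, S.coroot j⟫ = 0) → w' x = w x := by
  obtain ⟨l, rfl⟩ := S.exists_wordProd_eq hw
  obtain ⟨m, hmI, hm⟩ := S.exists_forall_isPositiveRoot_wordProd_mul I l
  refine ⟨S.wordProd l * S.wordProd m, mul_mem hw (S.wordProd_mem_weylGroup m), hm,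
    fun x hx => ?_⟩
  rw [LinearIsometryEquiv.coe_mul, Function.comp_apply,
    S.wordProd_apply_eq_self fun j hj => hx j (hmI j hj)]

variable (S) in
/-- `x` lies in the relative interior of the face of the dominant chamber on which exactly
the walls `⟪·, αᵛ j⟫ = 0`, `j ∈ I`, vanish. -/
def IsInOpenFace (I : Finset (Fin r)) (x : V) : Prop :=
  ∀ j, (j ∉ I → 0 < ⟪x, S.coroot j⟫) ∧ (j ∈ I → ⟪x, S.coroot j⟫ = 0)

theorem MemQplusplus.isInOpenFace {I : Finset (Fin r)} {x : V} (h : S.MemQplusplus I x) :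
    S.IsInOpenFace I x := fun j =>
  ⟨fun hj => by obtain ⟨n, hn, he⟩ := (h j).1 hj; rw [he]; exact_mod_cast hn, (h j).2⟩

theorem IsInOpenFace.isDominant {I : Finset (Fin r)} {x : V} (h : S.IsInOpenFace I x) :
    S.IsDominant x := fun j => by
  by_cases hj : j ∈ I
  · exact ((h j).2 hj).ge
  · exact ((h j).1 hj).le

theorem IsInOpenFace.eq_of_sub_eq_sum_coroot {I : Finset (Fin r)} {lam ξ ν : V}
    {c : Fin r → ℝ} (hlam : S.IsInOpenFace I lam) (hν : S.IsInOpenFace I ν)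
    (hξ : S.IsDominant ξ) (hc : ∀ i, 0 ≤ c i) (hsub : lam - ξ = ∑ i, c i • S.coroot i)
    (hle : ⟪ν, lam - ξ⟫ ≤ 0) : ξ = lam := by
  have hcI : ∀ i, c i ≠ 0 → i ∈ I := fun i hci => by
    by_contra hi
    exact hci (eq_zero_of_inner_sum_smul_nonpos hc hν.isDominant (hsub ▸ hle) ((hν i).1 hi))
  refine (sub_eq_zero.1 (hsub.trans (sum_smul_eq_zero_of_inner_nonpos hc fun i hci => ?_))).symm
  rw [← hsub, inner_sub_left, (hlam i).2 (hcI i hci), zero_sub, neg_nonpos]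
  exact hξ i

/-- Pairing with `ν` confines `lam - w lam` to the span of the `α i`, `i ∈ I`, which is
orthogonal to `lam`; since `w` is an isometry this forces `w lam = lam`. -/
theorem IsInOpenFace.apply_eq_self_of_inner_sub_nonpos {I : Finset (Fin r)} {lam ν : V}
    {w : V ≃ₗᵢ[ℝ] V} (hlam : S.IsInOpenFace I lam) (hν : S.IsInOpenFace I ν)
    (hw : w ∈ S.weylGroup) (hle : ⟪ν, lam - w lam⟫ ≤ 0) : w lam = lam := by
  obtain ⟨l, rfl⟩ := S.exists_wordProd_eq hw
  obtain ⟨a, ha, hsub⟩ := hlam.isDominant.exists_sub_wordProd_apply_eq_sum l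
  have hνα : ∀ i, 0 ≤ ⟪ν, S.α i⟫ := fun i => S.inner_coroot_nonneg_iff.1 (hν.isDominant i)
  have haI : ∀ i, a i ≠ 0 → i ∈ I := fun i hai => by
    by_contra hi
    exact hai (eq_zero_of_inner_sum_smul_nonpos ha hνα (hsub ▸ hle)
      (S.inner_coroot_pos_iff.1 ((hν i).1 hi)))
  refine eq_of_norm_eq_of_inner_sub_eq_zero (LinearIsometryEquiv.norm_map _ _) ?_
  rw [hsub, inner_sum]
  refine Finset.sum_eq_zero fun i _ => ?_
  by_cases hai : a i = 0
  · rw [hai, zero_smul, inner_zero_right]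
  · rw [real_inner_smul_right, S.inner_coroot_eq_zero_iff.1 ((hlam i).2 (haI i hai)), mul_zero]

end SimpleSystem

theorem exists_common_minimal_rep_of_inner_eq_general {V : Type*} [NormedAddCommGroup V]
    [InnerProductSpace ℝ V] {r : ℕ}
    (S : SimpleSystem V r) (I : Finset (Fin r)) {lam1 lam2 mu1 mu2 : V}
    (h1 : S.MemQplusplus I lam1) (h2 : S.MemQplusplus I lam2)
    (hm1 : S.IsSubdominant lam1 mu1) (hm2 : S.IsSubdominant lam2 mu2)
    (heq : ⟪mu1, mu2⟫ = ⟪lam1, lam2⟫) :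
    ∃ w ∈ S.weylGroup, (∀ i ∈ I, S.IsPositiveRoot (w (S.α i))) ∧
      mu1 = w lam1 ∧ mu2 = w lam2 := by
  obtain ⟨w₁, hw₁, hξ, c, hc, hsub₁⟩ := hm1
  obtain ⟨w₂, hw₂, hη, d, hd, hsub₂⟩ := hm2
  have hF₁ := h1.isInOpenFace
  have hF₂ := h2.isInOpenFace
  have hu : w₁ * w₂⁻¹ ∈ S.weylGroup := mul_mem hw₁ (inv_mem hw₂)
  have huη : (w₁ * w₂⁻¹) (w₂ mu2) = w₁ mu2 := by simp
  have hsplit : ⟪lam2, lam1 - w₁ mu1⟫ + ⟪w₁ mu1, lam2 - w₂ mu2⟫ +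
      ⟪w₁ mu1, w₂ mu2 - (w₁ * w₂⁻¹) (w₂ mu2)⟫ = 0 := by
    simp only [huη, inner_sub_right, LinearIsometryEquiv.inner_map_map, heq,
      real_inner_comm lam1 lam2, real_inner_comm (w₁ mu1) lam2]
    ring
  have h₁ : 0 ≤ ⟪lam2, lam1 - w₁ mu1⟫ := hsub₁ ▸ inner_sum_smul_nonneg hc hF₂.isDominant
  have h₂ : 0 ≤ ⟪w₁ mu1, lam2 - w₂ mu2⟫ := hsub₂ ▸ inner_sum_smul_nonneg hd hξ
  have h₃ := hξ.inner_sub_apply_nonneg hη hu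
  have hξ₁ : w₁ mu1 = lam1 := hF₁.eq_of_sub_eq_sum_coroot hF₂ hξ hc hsub₁ (by linarith)
  have hη₂ : w₂ mu2 = lam2 :=
    hF₂.eq_of_sub_eq_sum_coroot hF₁ hη hd hsub₂ (by rw [← hξ₁]; linarith)
  have hfix : (w₁ * w₂⁻¹) lam2 = lam2 :=
    hF₂.apply_eq_self_of_inner_sub_nonpos hF₁ hu (by rw [← hξ₁, ← hη₂]; linarith)
  obtain ⟨w, hw, hpos, hw_eq⟩ := S.exists_minimal_coset_rep I (inv_mem hw₁)
  refine ⟨w, hw, hpos, ?_, ?_⟩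
  · rw [hw_eq lam1 fun j hj => (hF₁ j).2 hj, ← hξ₁]
    simp
  · rw [hw_eq lam2 fun j hj => (hF₂ j).2 hj, ← hfix, ← hη₂, huη]
    simp

/-- Lemma 1, second equality case: if `λ1, λ2 ∈ Q_I^{++}`, `μ1, μ2` are subdominant
to `λ1, λ2` respectively and `⟪μ1, μ2⟫ = ⟪λ1, λ2⟫`, then there is a single `w` in the
Weyl group, sending `α i` to a positive root for every `i ∈ I` (i.e. `w ∈ W^I`),
with `μ1 = w λ1` and `μ2 = w λ2`. -/
theorem exists_common_minimal_rep_of_inner_eq {V : Type*} [NormedAddCommGroup V]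
    [InnerProductSpace ℝ V] [FiniteDimensional ℝ V] {r : ℕ}
    (S : SimpleSystem V r) (I : Finset (Fin r)) {lam1 lam2 mu1 mu2 : V}
    (h1 : S.MemQplusplus I lam1) (h2 : S.MemQplusplus I lam2)
    (hm1 : S.IsSubdominant lam1 mu1) (hm2 : S.IsSubdominant lam2 mu2)
    (heq : ⟪mu1, mu2⟫ = ⟪lam1, lam2⟫) :
    ∃ w ∈ S.weylGroup, (∀ i ∈ I, S.IsPositiveRoot (w (S.α i))) ∧
      mu1 = w lam1 ∧ mu2 = w lam2 :=
  exists_common_minimal_rep_of_inner_eq_general S I h1 h2 hm1 hm2 heq
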